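/- Fix real numbers m ≠ 0 and ℏ > 0 and a vector v = (v₁,v₂,v₃) ∈ ℝ³. For a smooth function F : ℝ³ × ℝ → ℂ, the following are equivalent: (i) for every smooth function ψ : ℝ³ × ℝ → ℂ and all (y,t), S⁰_m( e^{F} · ψ(· − t·v, ·) )(y,t) = e^{F(y,t)} · (S⁰_m ψ)(y − t·v, t); (ii) for all (y,t) and all k ∈ {1,2,3}: i·∂F/∂t(y,t) + (ℏ/(2m))( Σ_{k=1}^{3} (∂F/∂y_k(y,t))² + Σ_{k=1}^{3} ∂²F/∂y_k²(y,t) ) = 0 and (ℏ/m)·∂F/∂y_k(y,t) − i·v_k = 0. -/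

import Mathlib

open scoped BigOperators

/-- Partial derivative of `ψ : ℝ³ × ℝ → ℂ` in the spatial direction `y_k`. -/
noncomputable def pdy (ψ : (Fin 3 → ℝ) × ℝ → ℂ) (k : Fin 3) (p : (Fin 3 → ℝ) × ℝ) : ℂ :=
  deriv (fun s : ℝ => ψ (Function.update p.1 k s, p.2)) (p.1 k)

/-- Partial derivative of `ψ : ℝ³ × ℝ → ℂ` in the time direction `t`. -/
noncomputable def pdt (ψ : (Fin 3 → ℝ) × ℝ → ℂ) (p : (Fin 3 → ℝ) × ℝ) : ℂ :=
  deriv (fun s : ℝ => ψ (p.1, s)) p.2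

/-- The free Schrödinger operator
`S⁰_m ψ = (ℏ²/(2m)) Σ_k ∂²ψ/∂y_k² + iℏ ∂ψ/∂t`. -/
noncomputable def freeSchrodingerOp (m hbar : ℝ) (ψ : (Fin 3 → ℝ) × ℝ → ℂ)
    (p : (Fin 3 → ℝ) × ℝ) : ℂ :=
  (hbar ^ 2 / (2 * m)) * ∑ k : Fin 3, pdy (pdy ψ k) k p + Complex.I * hbar * pdt ψ p

abbrev E := (Fin 3 → ℝ) × ℝ
noncomputable def Dv (w : E) (ψ : E → ℂ) (q : E) : ℂ := fderiv ℝ ψ q w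
def ey (k : Fin 3) : E := (Pi.single k 1, 0)
def et : E := (0, 1)

lemma hasDerivAt_updY (p : E) (k : Fin 3) (s : ℝ) :
    HasDerivAt (fun s : ℝ => ((Function.update p.1 k s, p.2) : E)) (ey k) s := by
  have h1 : (fun s : ℝ => ((Function.update p.1 k s, p.2) : E))
      = fun s : ℝ => ((p.1 + (s - p.1 k) • (Pi.single k (1:ℝ) : Fin 3 → ℝ), p.2) : E) := by
    funext s
    refine Prod.ext ?_ rfl
    funext j
    by_cases h : j = k
    · subst h; simp
    · simp [Function.update_of_ne h, Pi.single_eq_of_ne h]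
  rw [h1]
  have h2 : HasDerivAt (fun s : ℝ => p.1 + (s - p.1 k) • (Pi.single k 1 : Fin 3 → ℝ))
      (Pi.single k 1) s := by
    have := (((hasDerivAt_id s).sub_const (p.1 k)).smul_const
      ((Pi.single k 1 : Fin 3 → ℝ))).const_add p.1
    simpa using this
  exact h2.prodMk (hasDerivAt_const s p.2)

lemma hasDerivAt_updT (p : E) (s : ℝ) :
    HasDerivAt (fun s : ℝ => ((p.1, s) : E)) et s :=
  (hasDerivAt_const s p.1).prodMk (hasDerivAt_id s)


lemma pdy_eq {ψ : E → ℂ} {p : E} (hψ : DifferentiableAt ℝ ψ p) (k : Fin 3) :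
    pdy ψ k p = Dv (ey k) ψ p := by
  have hg := hasDerivAt_updY p k (p.1 k)
  have hp : ((Function.update p.1 k (p.1 k), p.2) : E) = p := by
    refine Prod.ext ?_ rfl; simp
  have hf : HasFDerivAt ψ (fderiv ℝ ψ p) ((fun s : ℝ => ((Function.update p.1 k s, p.2) : E)) (p.1 k)) := by
    simpa [hp] using hψ.hasFDerivAt
  have := (hf.comp_hasDerivAt (p.1 k) hg).deriv
  simpa [Function.comp_def, pdy, Dv] using this

lemma pdt_eq {ψ : E → ℂ} {p : E} (hψ : DifferentiableAt ℝ ψ p) :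
    pdt ψ p = Dv et ψ p := by
  have hg := hasDerivAt_updT p p.2
  have hf : HasFDerivAt ψ (fderiv ℝ ψ p) ((fun s : ℝ => ((p.1, s) : E)) p.2) :=
    hψ.hasFDerivAt
  have := (hf.comp_hasDerivAt p.2 hg).deriv
  simpa [Function.comp_def, pdt, Dv] using this

lemma Dv_contDiff {ψ : E → ℂ} (w : E) (hψ : ContDiff ℝ (⊤ : ℕ∞) ψ) : ContDiff ℝ (⊤ : ℕ∞) (Dv w ψ) :=
  (hψ.fderiv_right (by simp)).clm_apply contDiff_const

lemma pdy_fun_eq {ψ : E → ℂ} (hψ : ContDiff ℝ (⊤ : ℕ∞) ψ) (k : Fin 3) :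
    pdy ψ k = Dv (ey k) ψ :=
  funext fun q => pdy_eq (hψ.differentiable (by simp) q) k

lemma pdy2_eq {ψ : E → ℂ} (hψ : ContDiff ℝ (⊤ : ℕ∞) ψ) (k : Fin 3) (p : E) :
    pdy (pdy ψ k) k p = Dv (ey k) (Dv (ey k) ψ) p := by
  rw [pdy_fun_eq hψ k]
  exact pdy_eq ((Dv_contDiff _ hψ).differentiable (by simp) p) k

lemma freeS_eq (m hbar : ℝ) {ψ : E → ℂ} (hψ : ContDiff ℝ (⊤ : ℕ∞) ψ) (p : E) :
    freeSchrodingerOp m hbar ψ p =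
      (hbar ^ 2 / (2 * m)) * ∑ k : Fin 3, Dv (ey k) (Dv (ey k) ψ) p
        + Complex.I * hbar * Dv et ψ p := by
  unfold freeSchrodingerOp
  rw [pdt_eq (hψ.differentiable (by simp) p)]
  congr 1
  congr 1
  exact Finset.sum_congr rfl fun k _ => pdy2_eq hψ k p

noncomputable def Lm (v : Fin 3 → ℝ) : E →L[ℝ] E :=
  ((ContinuousLinearMap.fst ℝ (Fin 3 → ℝ) ℝ) -
    (ContinuousLinearMap.snd ℝ (Fin 3 → ℝ) ℝ).smulRight v).prod
    (ContinuousLinearMap.snd ℝ (Fin 3 → ℝ) ℝ)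

lemma Lm_apply (v : Fin 3 → ℝ) (q : E) : Lm v q = (q.1 - q.2 • v, q.2) := rfl

lemma Dv_mul {f g : E → ℂ} {p : E} (w : E) (hf : DifferentiableAt ℝ f p)
    (hg : DifferentiableAt ℝ g p) :
    Dv w (fun q => f q * g q) p = Dv w f p * g p + f p * Dv w g p := by
  unfold Dv
  rw [fderiv_fun_mul hf hg]
  simp [smul_eq_mul]
  ring

lemma Dv_add {f g : E → ℂ} {p : E} (w : E) (hf : DifferentiableAt ℝ f p)
    (hg : DifferentiableAt ℝ g p) :
    Dv w (fun q => f q + g q) p = Dv w f p + Dv w g p := by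
  unfold Dv
  rw [fderiv_fun_add hf hg]
  simp

lemma Dv_exp {f : E → ℂ} {p : E} (w : E) (hf : DifferentiableAt ℝ f p) :
    Dv w (fun q => Complex.exp (f q)) p = Complex.exp (f p) * Dv w f p := by
  unfold Dv
  rw [hf.hasFDerivAt.cexp.fderiv]
  simp [smul_eq_mul]

lemma Dv_comp_L {ψ : E → ℂ} {v : Fin 3 → ℝ} {p : E} (w : E)
    (hψ : DifferentiableAt ℝ ψ (Lm v p)) :
    Dv w (fun q => ψ (Lm v q)) p = Dv (Lm v w) ψ (Lm v p) := by
  unfold Dv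
  rw [show (fun q => ψ (Lm v q)) = ψ ∘ (Lm v) from rfl,
    fderiv_comp p hψ (Lm v).differentiableAt, (Lm v).fderiv]
  rfl

lemma Lm_ey (v : Fin 3 → ℝ) (k : Fin 3) : Lm v (ey k) = ey k := by
  rw [Lm_apply]; simp [ey]

lemma Lm_et (v : Fin 3 → ℝ) : Lm v et = ((-v, 1) : E) := by
  rw [Lm_apply]; simp [et]

lemma Dv_neg_v (v : Fin 3 → ℝ) (ψ : E → ℂ) (q : E) :
    Dv ((-v, 1) : E) ψ q = Dv et ψ q - ∑ j : Fin 3, (v j : ℂ) * Dv (ey j) ψ q := by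
  have hw : ((-v, 1) : E) = et - ∑ j : Fin 3, (v j) • ey j := by
    refine Prod.ext ?_ ?_
    · simp only [Prod.fst_sub, Prod.fst_sum, Prod.smul_fst]
      simp [ey, et]
      funext i
      rw [Finset.sum_apply]
      simp [Pi.single_apply]
    · simp only [Prod.snd_sub, Prod.snd_sum, Prod.smul_snd]
      simp [ey, et]
  rw [hw]
  unfold Dv
  rw [map_sub, map_sum]
  simp [Complex.real_smul]

section Master
variable {v : Fin 3 → ℝ} {F ψ : E → ℂ} (hF : ContDiff ℝ (⊤ : ℕ∞) F) (hψ : ContDiff ℝ (⊤ : ℕ∞) ψ)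

include hF hψ in
lemma G_contDiff : ContDiff ℝ (⊤ : ℕ∞) (fun q => Complex.exp (F q) * ψ (Lm v q)) :=
  ContDiff.mul hF.cexp (hψ.comp (Lm v).contDiff)

include hF hψ in
lemma DvG (k : Fin 3) (q : E) :
    Dv (ey k) (fun q => Complex.exp (F q) * ψ (Lm v q)) q
      = Complex.exp (F q) * (Dv (ey k) F q * ψ (Lm v q) + Dv (ey k) ψ (Lm v q)) := by
  rw [Dv_mul (f := fun q => Complex.exp (F q)) (g := fun q => ψ (Lm v q)) (ey k)
      ((hF.differentiable (by simp) q).cexp)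
      ((hψ.comp (Lm v).contDiff).differentiable (by simp) q),
    Dv_exp (ey k) (hF.differentiable (by simp) q),
    Dv_comp_L (ey k) (hψ.differentiable (by simp) (Lm v q)), Lm_ey]
  ring

include hF hψ in
lemma DvDvG (k : Fin 3) (q : E) :
    Dv (ey k) (Dv (ey k) (fun q => Complex.exp (F q) * ψ (Lm v q))) q
      = Complex.exp (F q) * ((Dv (ey k) F q) ^ 2 * ψ (Lm v q)
          + Dv (ey k) (Dv (ey k) F) q * ψ (Lm v q)
          + 2 * Dv (ey k) F q * Dv (ey k) ψ (Lm v q)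
          + Dv (ey k) (Dv (ey k) ψ) (Lm v q)) := by
  have hfun : Dv (ey k) (fun q => Complex.exp (F q) * ψ (Lm v q))
      = fun q => Complex.exp (F q) * (Dv (ey k) F q * ψ (Lm v q) + Dv (ey k) ψ (Lm v q)) :=
    funext fun q => DvG hF hψ k q
  rw [hfun]
  have hDF : ContDiff ℝ (⊤ : ℕ∞) (Dv (ey k) F) := Dv_contDiff _ hF
  have hψL : ContDiff ℝ (⊤ : ℕ∞) (fun q => ψ (Lm v q)) := hψ.comp (Lm v).contDiff
  have hDψL : ContDiff ℝ (⊤ : ℕ∞) (fun q => Dv (ey k) ψ (Lm v q)) :=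
    (Dv_contDiff _ hψ).comp (Lm v).contDiff
  rw [Dv_mul (ey k) ((hF.differentiable (by simp) q).cexp)
      (((hDF.mul hψL).add hDψL).differentiable (by simp) q),
    Dv_exp (ey k) (hF.differentiable (by simp) q),
    Dv_add (ey k) ((hDF.mul hψL).differentiable (by simp) q) (hDψL.differentiable (by simp) q),
    Dv_mul (ey k) (hDF.differentiable (by simp) q) (hψL.differentiable (by simp) q),
    Dv_comp_L (ey k) (hψ.differentiable (by simp) (Lm v q)),
    Dv_comp_L (ey k) ((Dv_contDiff (ey k) hψ).differentiable (by simp) (Lm v q)), Lm_ey]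
  ring

include hF hψ in
lemma DtG (q : E) :
    Dv et (fun q => Complex.exp (F q) * ψ (Lm v q)) q
      = Complex.exp (F q) * (Dv et F q * ψ (Lm v q) + Dv et ψ (Lm v q)
          - ∑ j : Fin 3, (v j : ℂ) * Dv (ey j) ψ (Lm v q)) := by
  rw [Dv_mul (f := fun q => Complex.exp (F q)) (g := fun q => ψ (Lm v q)) et
      ((hF.differentiable (by simp) q).cexp)
      ((hψ.comp (Lm v).contDiff).differentiable (by simp) q),
    Dv_exp et (hF.differentiable (by simp) q),
    Dv_comp_L et (hψ.differentiable (by simp) (Lm v q)), Lm_et, Dv_neg_v]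
  ring

include hF hψ in
lemma master (m hbar : ℝ) (p : E) :
    freeSchrodingerOp m hbar (fun q => Complex.exp (F q) * ψ (Lm v q)) p
      = Complex.exp (F p) * (freeSchrodingerOp m hbar ψ (Lm v p)
        + ((hbar ^ 2 / (2 * m)) * ((∑ j : Fin 3, (Dv (ey j) F p) ^ 2)
            + ∑ j : Fin 3, Dv (ey j) (Dv (ey j) F) p)
          + Complex.I * hbar * Dv et F p) * ψ (Lm v p)
        + ∑ k : Fin 3, ((hbar ^ 2 / m) * Dv (ey k) F p
            - Complex.I * hbar * v k) * Dv (ey k) ψ (Lm v p)) := by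
  rw [freeS_eq m hbar (G_contDiff hF hψ) p, freeS_eq m hbar hψ (Lm v p)]
  have h1 : ∀ k : Fin 3, Dv (ey k) (Dv (ey k) (fun q => Complex.exp (F q) * ψ (Lm v q))) p
      = _ := fun k => DvDvG hF hψ k p
  rw [Finset.sum_congr rfl fun k _ => DvDvG hF hψ k p, DtG hF hψ p]
  simp only [Fin.sum_univ_three]

  ring

end Master

lemma Dv_const (w : E) (c : ℂ) (q : E) : Dv w (fun _ => c) q = 0 := by
  unfold Dv; simp

noncomputable def Kc (k : Fin 3) : E →L[ℝ] ℂ :=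
  Complex.ofRealCLM.comp ((ContinuousLinearMap.proj k).comp
    (ContinuousLinearMap.fst ℝ (Fin 3 → ℝ) ℝ))

lemma Kc_apply (k : Fin 3) (q : E) : Kc k q = ((q.1 k : ℝ) : ℂ) := rfl

lemma Kc_contDiff (k : Fin 3) : ContDiff ℝ (⊤ : ℕ∞) (fun q : E => ((q.1 k : ℝ) : ℂ)) :=
  (Kc k).contDiff

lemma Dv_Kc (k : Fin 3) (w q : E) : Dv w (fun q : E => ((q.1 k : ℝ) : ℂ)) q = ((w.1 k : ℝ) : ℂ) := by
  unfold Dv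
  rw [show (fun q : E => ((q.1 k : ℝ) : ℂ)) = ⇑(Kc k) from rfl, (Kc k).fderiv]
  rfl

lemma Dv_ey_Kc (j k : Fin 3) (q : E) :
    Dv (ey j) (fun q : E => ((q.1 k : ℝ) : ℂ)) q = if j = k then 1 else 0 := by
  rw [Dv_Kc]
  by_cases h : j = k <;> simp [ey, h, Pi.single_apply]

lemma Dv2_Kc (j k : Fin 3) (w : E) (q : E) :
    Dv w (Dv (ey j) (fun q : E => ((q.1 k : ℝ) : ℂ))) q = 0 := by
  have : Dv (ey j) (fun q : E => ((q.1 k : ℝ) : ℂ)) = fun _ => ((if j = k then 1 else 0 : ℂ)) :=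
    funext fun q => Dv_ey_Kc j k q
  rw [this, Dv_const]

/-- A smooth phase function `F` makes the gauge transformation
`ψ ↦ e^F · ψ(·−t·v, ·)` intertwine the free Schrödinger operator if and only if `F`
satisfies the system of PDEs
`i·∂F/∂t + (ℏ/(2m))(Σ_k (∂F/∂y_k)² + Σ_k ∂²F/∂y_k²) = 0` and
`(ℏ/m)·∂F/∂y_k − i·v_k = 0`, `k = 1,2,3`. -/
theorem gauge_intertwines_iff_pde
    (m hbar : ℝ) (hm : m ≠ 0) (hh : 0 < hbar) (v : Fin 3 → ℝ)
    (F : (Fin 3 → ℝ) × ℝ → ℂ) (hF : ContDiff ℝ (⊤ : ℕ∞) F) :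
    (∀ ψ : (Fin 3 → ℝ) × ℝ → ℂ, ContDiff ℝ (⊤ : ℕ∞) ψ →
      ∀ p : (Fin 3 → ℝ) × ℝ,
        freeSchrodingerOp m hbar
          (fun q => Complex.exp (F q) * ψ (q.1 - q.2 • v, q.2)) p
        = Complex.exp (F p) * freeSchrodingerOp m hbar ψ (p.1 - p.2 • v, p.2))
    ↔ (∀ p : (Fin 3 → ℝ) × ℝ, ∀ k : Fin 3,
        Complex.I * pdt F p + (hbar / (2 * m) : ℝ) *
          ((∑ j : Fin 3, (pdy F j p) ^ 2) + ∑ j : Fin 3, pdy (pdy F j) j p) = 0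
        ∧ (hbar / m : ℝ) * pdy F k p - Complex.I * v k = 0) := by
  have hbC : (hbar : ℂ) ≠ 0 := Complex.ofReal_ne_zero.mpr (ne_of_gt hh)
  -- notation
  set C : E → ℂ := fun p => ((hbar : ℂ) ^ 2 / (2 * m)) * ((∑ j : Fin 3, (Dv (ey j) F p) ^ 2)
      + ∑ j : Fin 3, Dv (ey j) (Dv (ey j) F) p) + Complex.I * hbar * Dv et F p with hCdef
  have key : ∀ (ψ : E → ℂ), ContDiff ℝ (⊤ : ℕ∞) ψ → ∀ p : E,
      freeSchrodingerOp m hbar (fun q => Complex.exp (F q) * ψ (q.1 - q.2 • v, q.2)) p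
        = Complex.exp (F p) * (freeSchrodingerOp m hbar ψ (p.1 - p.2 • v, p.2)
          + C p * ψ (p.1 - p.2 • v, p.2)
          + ∑ k : Fin 3, (((hbar : ℂ) ^ 2 / m) * Dv (ey k) F p
              - Complex.I * hbar * v k) * Dv (ey k) ψ (p.1 - p.2 • v, p.2)) := by
    intro ψ hψ p
    exact master hF hψ m hbar p
  -- bridge for F derivatives
  have hb1 : ∀ p : E, ∀ j : Fin 3, pdy F j p = Dv (ey j) F p :=
    fun p j => pdy_eq (hF.differentiable (by simp) p) j
  have hb2 : ∀ p : E, ∀ j : Fin 3, pdy (pdy F j) j p = Dv (ey j) (Dv (ey j) F) p :=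
    fun p j => pdy2_eq hF j p
  have hb3 : ∀ p : E, pdt F p = Dv et F p := fun p => pdt_eq (hF.differentiable (by simp) p)
  constructor
  · intro h p k
    have hC0 : C p = 0 := by
      have h1 := (key (fun _ => (1 : ℂ)) contDiff_const p).symm.trans
        (h (fun _ => (1 : ℂ)) contDiff_const p)
      have h2 := mul_left_cancel₀ (Complex.exp_ne_zero (F p)) h1
      simpa [freeSchrodingerOp, pdy, pdt, Dv_const] using h2
    constructor
    · have hrel : (hbar : ℂ) * (Complex.I * pdt F p + (hbar / (2 * m) : ℝ) *
          ((∑ j : Fin 3, (pdy F j p) ^ 2) + ∑ j : Fin 3, pdy (pdy F j) j p)) = C p := by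
        rw [hCdef]
        simp only [hb1, hb2, hb3]
        push_cast
        ring
      have := hrel.trans hC0
      rcases mul_eq_zero.mp this with h' | h'
      · exact absurd h' hbC
      · exact h'
    · -- second equation, via coordinate test function
      have h1 := (key (fun q : E => ((q.1 k : ℝ) : ℂ)) (Kc_contDiff k) p).symm.trans
        (h (fun q : E => ((q.1 k : ℝ) : ℂ)) (Kc_contDiff k) p)
      have h2 := mul_left_cancel₀ (Complex.exp_ne_zero (F p)) h1
      have hcoef : ((hbar : ℂ) ^ 2 / m) * Dv (ey k) F p - Complex.I * hbar * v k = 0 := by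
        have hfs : freeSchrodingerOp m hbar (fun q : E => ((q.1 k : ℝ) : ℂ))
            (p.1 - p.2 • v, p.2) = 0 := by
          rw [freeS_eq m hbar (Kc_contDiff k)]
          simp [Dv2_Kc, Dv_Kc, et]
        rw [hfs, hC0] at h2
        have h3 : (∑ j : Fin 3, (((hbar : ℂ) ^ 2 / m) * Dv (ey j) F p
            - Complex.I * hbar * v j) * Dv (ey j) (fun q : E => ((q.1 k : ℝ) : ℂ))
              (p.1 - p.2 • v, p.2)) = 0 := by linear_combination h2
        rw [Finset.sum_congr rfl (fun j _ => by rw [Dv_ey_Kc])] at h3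
        simpa using h3
      have hrel : (hbar : ℂ) * ((hbar / m : ℝ) * pdy F k p - Complex.I * v k)
          = ((hbar : ℂ) ^ 2 / m) * Dv (ey k) F p - Complex.I * hbar * v k := by
        simp only [hb1]
        push_cast
        ring
      have := hrel.trans hcoef
      rcases mul_eq_zero.mp this with h' | h'
      · exact absurd h' hbC
      · exact h'
  · intro h ψ hψ p
    have hC0 : C p = 0 := by
      have h1 := (h p 0).1
      have hrel : (hbar : ℂ) * (Complex.I * pdt F p + (hbar / (2 * m) : ℝ) *
          ((∑ j : Fin 3, (pdy F j p) ^ 2) + ∑ j : Fin 3, pdy (pdy F j) j p)) = C p := by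
        rw [hCdef]
        simp only [hb1, hb2, hb3]
        push_cast
        ring
      rw [← hrel, h1, mul_zero]
    have hcoef : ∀ k : Fin 3, ((hbar : ℂ) ^ 2 / m) * Dv (ey k) F p
        - Complex.I * hbar * v k = 0 := by
      intro k
      have h1 := (h p k).2
      have hrel : (hbar : ℂ) * ((hbar / m : ℝ) * pdy F k p - Complex.I * v k)
          = ((hbar : ℂ) ^ 2 / m) * Dv (ey k) F p - Complex.I * hbar * v k := by
        simp only [hb1]
        push_cast
        ring
      rw [← hrel, h1, mul_zero]
    rw [key ψ hψ p, hC0]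
    rw [Finset.sum_congr rfl (fun k _ => by rw [hcoef k, zero_mul])]
    simp
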